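/- For a prime p with p ≡ 3 (mod 4), the number of blocks of nonzero solutions to the Markoff equation x^2+y^2+z^2=xyz over F_p equals p(p-3)/4. -/

import Mathlib

open Finset

variable {p : ℕ} [Fact p.Prime]



lemma hF_aux (hp2 : p ≠ 2) : ringChar (ZMod p) ≠ 2 := by
  rw [ZMod.ringChar_zmod_n]; exact hp2

lemma zmod_two_ne_zero (hp2 : p ≠ 2) : (2 : ZMod p) ≠ 0 := by
  have : ((2:ℕ) : ZMod p) ≠ 0 := by
    rw [Ne, ZMod.natCast_eq_zero_iff]
    intro h
    exact hp2 ((Nat.prime_dvd_prime_iff_eq (Fact.out) Nat.prime_two).mp h)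
  simpa using this

lemma chi_sum_mul (hp2 : p ≠ 2) {c : ZMod p} (hc : c ≠ 0) :
    ∑ t : ZMod p, quadraticChar (ZMod p) (t * (t + c)) = -1 := by
  classical
  set χ := quadraticChar (ZMod p)
  have h0 : ∑ t : ZMod p, χ (t * (t + c)) = ∑ t ∈ univ.erase 0, χ (t * (t + c)) := by
    rw [sum_erase_eq_sub (mem_univ 0)]
    simp [χ]
  rw [h0]
  have h1 : ∀ t ∈ univ.erase (0 : ZMod p), χ (t * (t + c)) = χ (1 + c * t⁻¹) := by
    intro t ht
    have ht0 : t ≠ 0 := by simpa using ht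
    have : t * (t + c) = t ^ 2 * (1 + c * t⁻¹) := by
      field_simp
    rw [this, map_mul, quadraticChar_sq_one' ht0, one_mul]
  rw [sum_congr rfl h1]
  have h2 : ∑ t ∈ univ.erase (0 : ZMod p), χ (1 + c * t⁻¹)
      = ∑ s ∈ univ.erase (1 : ZMod p), χ s := by
    apply sum_nbij' (fun t => 1 + c * t⁻¹) (fun s => c * (s - 1)⁻¹)
    · intro t ht
      have ht0 : t ≠ 0 := by simpa using ht
      simp only [mem_erase, mem_univ, and_true]
      intro h
      have : c * t⁻¹ = 0 := by linear_combination h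
      exact hc (by
        rcases mul_eq_zero.mp this with h' | h'
        · exact h'
        · exact absurd (inv_eq_zero.mp h') ht0)
    · intro s hs
      have hs1 : s ≠ 1 := by simpa using hs
      simp only [mem_erase, mem_univ, and_true]
      intro h
      rcases mul_eq_zero.mp h with h' | h'
      · exact hc h'
      · exact hs1 (sub_eq_zero.mp (inv_eq_zero.mp h'))
    · intro t ht
      have ht0 : t ≠ 0 := by simpa using ht
      field_simp
      simp [hc]
    · intro s hs
      have hs1 : s ≠ 1 := by simpa using hs
      have hsz : s - 1 ≠ 0 := sub_ne_zero.mpr hs1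
      field_simp
      ring
    · intro t ht; rfl
  rw [h2, sum_erase_eq_sub (mem_univ 1), quadraticChar_sum_zero (hF_aux hp2)]
  simp [χ]

lemma chi_card_sqrts (hp2 : p ≠ 2) (a : ZMod p) :
    ((univ.filter (fun x : ZMod p => x ^ 2 = a)).card : ℤ)
      = quadraticChar (ZMod p) a + 1 := by
  classical
  have := quadraticChar_card_sqrts (hF_aux hp2) a
  rw [← this]
  congr 1
  simp [Set.toFinset_setOf]

lemma chi_sum_sq_add (hp2 : p ≠ 2) {c : ZMod p} (hc : c ≠ 0) :
    ∑ y : ZMod p, quadraticChar (ZMod p) (y ^ 2 + c) = -1 := by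
  classical
  set χ := quadraticChar (ZMod p) with hχ
  have fib := sum_fiberwise_of_maps_to (s := (univ : Finset (ZMod p))) (t := univ)
    (g := fun y : ZMod p => y ^ 2)
    (fun x _ => mem_univ (x ^ 2)) (fun y => χ (y ^ 2 + c))
  have step : ∀ t : ZMod p,
      ∑ y ∈ univ.filter (fun y : ZMod p => y ^ 2 = t), χ (y ^ 2 + c)
        = (χ t + 1) * χ (t + c) := by
    intro t
    have h1 : ∀ y ∈ univ.filter (fun y : ZMod p => y ^ 2 = t),
        χ (y ^ 2 + c) = χ (t + c) := by
      intro y hy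
      rw [(mem_filter.mp hy).2]
    rw [sum_congr rfl h1, sum_const, nsmul_eq_mul, ← chi_card_sqrts hp2 t]
  rw [← fib, sum_congr rfl (fun t _ => step t)]
  have expand : ∀ t : ZMod p, (χ t + 1) * χ (t + c) = χ (t * (t + c)) + χ (t + c) := by
    intro t
    rw [map_mul]; ring
  rw [sum_congr rfl (fun t _ => expand t), sum_add_distrib, chi_sum_mul hp2 hc]
  have : ∑ t : ZMod p, χ (t + c) = 0 := by
    rw [show (∑ t : ZMod p, χ (t + c)) = ∑ t : ZMod p, χ t from
      Fintype.sum_equiv (Equiv.addRight c) _ χ (fun t => rfl)]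
    exact quadraticChar_sum_zero (hF_aux hp2)
  rw [this]; ring

lemma chi_sum_mul_sq_add (hp2 : p ≠ 2) {a c : ZMod p} (ha : a ≠ 0) (hc : c ≠ 0) :
    ∑ y : ZMod p, quadraticChar (ZMod p) (a * y ^ 2 + c) = -quadraticChar (ZMod p) a := by
  classical
  set χ := quadraticChar (ZMod p)
  have h1 : ∀ y : ZMod p, χ (a * y ^ 2 + c) = χ a * χ (y ^ 2 + c * a⁻¹) := by
    intro y
    rw [← map_mul]
    congr 1
    field_simp
  rw [sum_congr rfl (fun y _ => h1 y), ← mul_sum,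
    chi_sum_sq_add hp2 (by simp [hc, inv_eq_zero, ha] : c * a⁻¹ ≠ 0)]
  ring

lemma zmod_four_ne_zero (hp2 : p ≠ 2) : (4 : ZMod p) ≠ 0 := by
  have h2 := zmod_two_ne_zero hp2
  have : (4 : ZMod p) = 2 * 2 := by norm_num
  rw [this]
  exact mul_ne_zero h2 h2

lemma chi_neg_one (hp : p % 4 = 3) : quadraticChar (ZMod p) (-1) = -1 := by
  rw [quadraticChar_neg_one_iff_not_isSquare, ZMod.exists_sq_eq_neg_one_iff]
  simp [hp]

lemma inner_sum_aux (hp : p % 4 = 3) (x : ZMod p) :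
    ∑ y : ZMod p, quadraticChar (ZMod p) ((x ^ 2 - 4) * y ^ 2 - 4 * x ^ 2)
      = -quadraticChar (ZMod p) (x ^ 2 - 4)
        + (if x ^ 2 = 4 then -(p : ℤ) else 0) + (if x = 0 then -(p : ℤ) else 0) := by
  classical
  have hp2 : p ≠ 2 := by omega
  set χ := quadraticChar (ZMod p)
  have h4 : (4 : ZMod p) ≠ 0 := zmod_four_ne_zero hp2
  have h2 : (2 : ZMod p) ≠ 0 := zmod_two_ne_zero hp2
  by_cases hx4 : x ^ 2 = 4
  · -- x² = 4, so x ≠ 0, each term is χ(-16) = -1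
    have hx0 : x ≠ 0 := by
      intro h; rw [h] at hx4; simp at hx4; exact h4 hx4.symm
    have hterm : ∀ y : ZMod p, χ ((x ^ 2 - 4) * y ^ 2 - 4 * x ^ 2) = -1 := by
      intro y
      have : (x ^ 2 - 4) * y ^ 2 - 4 * x ^ 2 = (-1) * 4 ^ 2 := by rw [hx4]; ring
      rw [this, map_mul, chi_neg_one hp, quadraticChar_sq_one' h4]
      norm_num
    rw [sum_congr rfl (fun y _ => hterm y), sum_const, card_univ, ZMod.card]
    simp [hx4, hx0, χ]
  · by_cases hx0 : x = 0
    · -- x = 0 : ∑ χ(-4 y²) = -(p-1)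
      subst hx0
      have hterm : ∀ y : ZMod p, χ ((0 ^ 2 - 4) * y ^ 2 - 4 * 0 ^ 2)
          = (-1) * χ ((2 * y) ^ 2) := by
        intro y
        rw [← chi_neg_one hp, ← map_mul]
        congr 1
        ring
      rw [sum_congr rfl (fun y _ => hterm y), ← mul_sum]
      have hs : ∑ y : ZMod p, χ ((2 * y) ^ 2) = (p : ℤ) - 1 := by
        rw [← sum_erase_add _ _ (mem_univ (0 : ZMod p))]
        have hone : ∀ y ∈ univ.erase (0 : ZMod p), χ ((2 * y) ^ 2) = 1 := by
          intro y hy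
          exact quadraticChar_sq_one' (mul_ne_zero h2 (by simpa using hy))
        rw [sum_congr rfl hone, sum_const, card_erase_of_mem (mem_univ _), card_univ,
          ZMod.card]
        have hz : χ ((2 * (0 : ZMod p)) ^ 2) = 0 := by
          rw [show ((2 : ZMod p) * 0) ^ 2 = 0 by ring, MulChar.map_zero]
        rw [hz, add_zero, nsmul_eq_mul, mul_one]
        have h1 : 1 ≤ p := (Fact.out : p.Prime).one_lt.le
        rw [Nat.cast_sub h1]
        norm_num
      rw [hs]
      have hχm4 : χ (0 ^ 2 - 4) = -1 := by
        have : (0 : ZMod p) ^ 2 - 4 = (-1) * 2 ^ 2 := by ring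
        rw [this, map_mul, chi_neg_one hp, quadraticChar_sq_one' h2]
        norm_num
      rw [hχm4, if_neg hx4, if_pos rfl]
      ring
    · -- generic case
      have ha : x ^ 2 - 4 ≠ 0 := sub_ne_zero.mpr hx4
      have hc : -(4 * x ^ 2) ≠ 0 := by
        simp only [neg_ne_zero]
        exact mul_ne_zero h4 (pow_ne_zero 2 hx0)
      have hterm : ∀ y : ZMod p, ((x ^ 2 - 4) * y ^ 2 - 4 * x ^ 2)
          = (x ^ 2 - 4) * y ^ 2 + -(4 * x ^ 2) := by intro y; ring
      calc ∑ y : ZMod p, χ ((x ^ 2 - 4) * y ^ 2 - 4 * x ^ 2)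
          = ∑ y : ZMod p, χ ((x ^ 2 - 4) * y ^ 2 + -(4 * x ^ 2)) := by
            exact sum_congr rfl (fun y _ => by rw [hterm y])
        _ = -χ (x ^ 2 - 4) := chi_sum_mul_sq_add hp2 ha hc
        _ = _ := by simp [hx4, hx0]

lemma double_sum (hp : p % 4 = 3) :
    ∑ x : ZMod p, ∑ y : ZMod p,
      quadraticChar (ZMod p) ((x ^ 2 - 4) * y ^ 2 - 4 * x ^ 2) = 1 - 3 * (p : ℤ) := by
  classical
  have hp2 : p ≠ 2 := by omega
  set χ := quadraticChar (ZMod p)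
  rw [sum_congr rfl (fun x _ => inner_sum_aux hp x), sum_add_distrib, sum_add_distrib]
  have e1 : ∑ x : ZMod p, -χ (x ^ 2 - 4) = 1 := by
    rw [show (∑ x : ZMod p, -χ (x ^ 2 - 4)) = -∑ x : ZMod p, χ (x ^ 2 - 4) by
      rw [← Finset.sum_neg_distrib]]
    have : ∀ x : ZMod p, χ (x ^ 2 - 4) = χ (x ^ 2 + (-4)) := by
      intro x; congr 1; ring
    rw [sum_congr rfl (fun x _ => this x),
      chi_sum_sq_add hp2 (show (-4 : ZMod p) ≠ 0 by
        simpa using zmod_four_ne_zero hp2)]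
    norm_num
  have e2 : ∑ x : ZMod p, (if x ^ 2 = 4 then -(p : ℤ) else 0) = -2 * (p : ℤ) := by
    rw [← sum_filter]
    rw [sum_const]
    have hc : ((univ.filter (fun x : ZMod p => x ^ 2 = 4)).card : ℤ) = 2 := by
      rw [chi_card_sqrts hp2]
      have : (4 : ZMod p) = 2 ^ 2 := by norm_num
      rw [this, quadraticChar_sq_one' (zmod_two_ne_zero hp2)]
      norm_num
    rw [nsmul_eq_mul]
    rw [show ((univ.filter (fun x : ZMod p => x ^ 2 = 4)).card : ℤ) = 2 from hc]
    ring
  have e3 : ∑ x : ZMod p, (if x = 0 then -(p : ℤ) else 0) = -(p : ℤ) := by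
    simp [sum_ite_eq']
  rw [e1, e2, e3]
  ring

lemma count_all (hp : p % 4 = 3) :
    (((univ : Finset (ZMod p × ZMod p × ZMod p)).filter
        (fun v => v.1 ^ 2 + v.2.1 ^ 2 + v.2.2 ^ 2 = v.1 * v.2.1 * v.2.2)).card : ℤ)
      = (p : ℤ) ^ 2 + (1 - 3 * (p : ℤ)) := by
  classical
  have hp2 : p ≠ 2 := by omega
  have h2 : (2 : ZMod p) ≠ 0 := zmod_two_ne_zero hp2
  set χ := quadraticChar (ZMod p)
  set S := (univ : Finset (ZMod p × ZMod p × ZMod p)).filter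
      (fun v => v.1 ^ 2 + v.2.1 ^ 2 + v.2.2 ^ 2 = v.1 * v.2.1 * v.2.2) with hS
  have fib : S.card = ∑ w : ZMod p × ZMod p,
      (S.filter (fun v => (v.1, v.2.1) = w)).card :=
    card_eq_sum_card_fiberwise (fun x _ => mem_univ _)
  have step1 : ∀ w : ZMod p × ZMod p,
      (S.filter (fun v => (v.1, v.2.1) = w)).card
        = (univ.filter (fun z : ZMod p =>
            w.1 ^ 2 + w.2 ^ 2 + z ^ 2 = w.1 * w.2 * z)).card := by
    rintro ⟨x, y⟩
    apply card_nbij' (fun v => v.2.2) (fun z => (x, y, z))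
    · rintro ⟨a, b, c⟩ hv
      simp only [Finset.mem_coe, mem_filter, mem_univ, true_and, hS, Prod.mk.injEq] at hv ⊢
      obtain ⟨h1, h2, h3⟩ := hv
      subst h2; subst h3; exact h1
    · intro z hz
      simp only [Finset.mem_coe, mem_filter, mem_univ, true_and, hS, Prod.mk.injEq] at hz ⊢
      tauto
    · rintro ⟨a, b, c⟩ hv
      simp only [Finset.mem_coe, mem_filter, hS, Prod.mk.injEq] at hv
      obtain ⟨_, h2, h3⟩ := hv
      simp [h2, h3]
    · intro z _; rfl
  have step2 : ∀ x y : ZMod p,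
      ((univ.filter (fun z : ZMod p => x ^ 2 + y ^ 2 + z ^ 2 = x * y * z)).card : ℤ)
        = χ ((x ^ 2 - 4) * y ^ 2 - 4 * x ^ 2) + 1 := by
    intro x y
    have hb : (univ.filter (fun z : ZMod p => x ^ 2 + y ^ 2 + z ^ 2 = x * y * z)).card
        = (univ.filter (fun u : ZMod p => u ^ 2 = x ^ 2 * y ^ 2 - 4 * x ^ 2 - 4 * y ^ 2)).card := by
      apply card_nbij' (fun z => 2 * z - x * y) (fun u => (u + x * y) * 2⁻¹)
      · intro z hz
        simp only [Finset.mem_coe, mem_filter, mem_univ, true_and] at hz ⊢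
        linear_combination (4 : ZMod p) * hz
      · intro u hu
        simp only [Finset.mem_coe, mem_filter, mem_univ, true_and] at hu ⊢
        have ht : (2 : ZMod p) * 2⁻¹ = 1 := mul_inv_cancel₀ h2
        linear_combination ((2:ZMod p)⁻¹ ^ 2) * hu +
          ((2:ZMod p)⁻¹ * (u * x * y + x ^ 2 * y ^ 2 - 2 * x ^ 2 - 2 * y ^ 2)
            - x ^ 2 - y ^ 2) * ht
      · intro z hz
        field_simp
        ring
      · intro u hu
        field_simp
        ring
    rw [hb, chi_card_sqrts hp2]
    congr 2
    ring
  have : (S.card : ℤ) = ∑ w : ZMod p × ZMod p, (χ ((w.1 ^ 2 - 4) * w.2 ^ 2 - 4 * w.1 ^ 2) + 1) := by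
    rw [fib]
    push_cast
    exact Finset.sum_congr rfl (fun w _ => by
      rw [step1 w, step2 w.1 w.2])
  rw [this, sum_add_distrib, Fintype.sum_prod_type, double_sum hp]
  simp [card_univ, ZMod.card]
  ring

def mblock {p : ℕ} (v : ZMod p × ZMod p × ZMod p) : Set (ZMod p × ZMod p × ZMod p) :=
  {(v.1, v.2.1, v.2.2), (v.1, -v.2.1, -v.2.2), (-v.1, v.2.1, -v.2.2), (-v.1, -v.2.1, v.2.2)}

lemma mblock_triple {p : ℕ} (x y z : ZMod p) :
    mblock (x, y, z) = {(x, y, z), (x, -y, -z), (-x, y, -z), (-x, -y, z)} := rfl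

lemma mblock_flip1 {p : ℕ} (x y z : ZMod p) : mblock (x, -y, -z) = mblock (x, y, z) := by
  rw [mblock_triple, mblock_triple]
  ext u
  simp only [Set.mem_insert_iff, Set.mem_singleton_iff, neg_neg]
  tauto

lemma mblock_flip2 {p : ℕ} (x y z : ZMod p) : mblock (-x, y, -z) = mblock (x, y, z) := by
  rw [mblock_triple, mblock_triple]
  ext u
  simp only [Set.mem_insert_iff, Set.mem_singleton_iff, neg_neg]
  tauto

lemma mblock_flip3 {p : ℕ} (x y z : ZMod p) : mblock (-x, -y, z) = mblock (x, y, z) := by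
  rw [mblock_triple, mblock_triple]
  ext u
  simp only [Set.mem_insert_iff, Set.mem_singleton_iff, neg_neg]
  tauto

lemma self_mem_mblock {p : ℕ} (v : ZMod p × ZMod p × ZMod p) : v ∈ mblock v := by
  rw [mblock]
  left
  rfl


open scoped Classical in
noncomputable def msols (p : ℕ) [NeZero p] : Finset (ZMod p × ZMod p × ZMod p) :=
  (univ : Finset (ZMod p × ZMod p × ZMod p)).filter
    (fun v => v.1 ^ 2 + v.2.1 ^ 2 + v.2.2 ^ 2 = v.1 * v.2.1 * v.2.2 ∧ v ≠ (0, 0, 0))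

lemma mem_msols {p : ℕ} [NeZero p] (v : ZMod p × ZMod p × ZMod p) :
    v ∈ msols p ↔ v.1 ^ 2 + v.2.1 ^ 2 + v.2.2 ^ 2 = v.1 * v.2.1 * v.2.2 ∧ v ≠ (0, 0, 0) := by
  rw [msols]
  simp

open scoped Classical in
lemma fiber_card {p : ℕ} [Fact p.Prime] (hp2 : p ≠ 2) :
    ∀ B ∈ (msols p).image mblock,
      ((msols p).filter (fun w => mblock w = B)).card = 4 := by
  classical
  have h2 : (2 : ZMod p) ≠ 0 := zmod_two_ne_zero hp2
  have half : ∀ a : ZMod p, a = -a → a = 0 := by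
    intro a h
    have h' : 2 * a = 0 := by linear_combination h
    rcases mul_eq_zero.mp h' with h'' | h''
    · exact absurd h'' h2
    · exact h''
  rintro B hB
  obtain ⟨⟨x, y, z⟩, hvT, rfl⟩ := mem_image.mp hB
  rw [mem_msols] at hvT
  obtain ⟨hM, hne⟩ := hvT
  simp only at hM hne
  have hyz : ¬(y = 0 ∧ z = 0) := by
    rintro ⟨rfl, rfl⟩
    apply hne
    have hx2 : x ^ 2 = 0 := by linear_combination hM
    have hx : x = 0 := pow_eq_zero_iff (n := 2) (by norm_num) |>.mp hx2
    rw [hx]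
  have hxz : ¬(x = 0 ∧ z = 0) := by
    rintro ⟨rfl, rfl⟩
    apply hne
    have hy2 : y ^ 2 = 0 := by linear_combination hM
    have hy : y = 0 := pow_eq_zero_iff (n := 2) (by norm_num) |>.mp hy2
    rw [hy]
  have hxy : ¬(x = 0 ∧ y = 0) := by
    rintro ⟨rfl, rfl⟩
    apply hne
    have hz2 : z ^ 2 = 0 := by linear_combination hM
    have hz : z = 0 := pow_eq_zero_iff (n := 2) (by norm_num) |>.mp hz2
    rw [hz]
  have d12 : ((x, y, z) : ZMod p × ZMod p × ZMod p) ≠ (x, -y, -z) := by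
    intro h
    simp only [Prod.ext_iff] at h
    exact hyz ⟨half y h.2.1, half z h.2.2⟩
  have d13 : ((x, y, z) : ZMod p × ZMod p × ZMod p) ≠ (-x, y, -z) := by
    intro h
    simp only [Prod.ext_iff] at h
    exact hxz ⟨half x h.1, half z h.2.2⟩
  have d14 : ((x, y, z) : ZMod p × ZMod p × ZMod p) ≠ (-x, -y, z) := by
    intro h
    simp only [Prod.ext_iff] at h
    exact hxy ⟨half x h.1, half y h.2.1⟩
  have d23 : ((x, -y, -z) : ZMod p × ZMod p × ZMod p) ≠ (-x, y, -z) := by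
    intro h
    simp only [Prod.ext_iff] at h
    refine hxy ⟨half x h.1, ?_⟩
    have hy' : y = -y := by linear_combination -h.2.1
    exact half y hy'
  have d24 : ((x, -y, -z) : ZMod p × ZMod p × ZMod p) ≠ (-x, -y, z) := by
    intro h
    simp only [Prod.ext_iff] at h
    refine hxz ⟨half x h.1, ?_⟩
    have hz' : z = -z := by linear_combination -h.2.2
    exact half z hz'
  have d34 : ((-x, y, -z) : ZMod p × ZMod p × ZMod p) ≠ (-x, -y, z) := by
    intro h
    simp only [Prod.ext_iff] at h
    refine hyz ⟨half y h.2.1, ?_⟩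
    have hz' : z = -z := by linear_combination -h.2.2
    exact half z hz'
  have key : (msols p).filter (fun w => mblock w = mblock (x, y, z))
      = ({(x, y, z), (x, -y, -z), (-x, y, -z), (-x, -y, z)} :
          Finset (ZMod p × ZMod p × ZMod p)) := by
    ext w
    simp only [mem_filter, mem_insert, mem_singleton]
    constructor
    · rintro ⟨hwT, hw⟩
      have hwmem : w ∈ mblock (x, y, z) := hw ▸ self_mem_mblock w
      rw [mblock_triple] at hwmem
      simpa using hwmem
    · intro hw
      rcases hw with rfl | rfl | rfl | rfl
      · exact ⟨(mem_msols _).mpr ⟨hM, hne⟩, rfl⟩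
      · refine ⟨(mem_msols _).mpr ⟨by simp only; linear_combination hM, ?_⟩,
          mblock_flip1 x y z⟩
        intro h
        simp only [Prod.ext_iff, neg_eq_zero] at h
        exact hne (by simp [h.1, h.2.1, h.2.2])
      · refine ⟨(mem_msols _).mpr ⟨by simp only; linear_combination hM, ?_⟩,
          mblock_flip2 x y z⟩
        intro h
        simp only [Prod.ext_iff, neg_eq_zero] at h
        exact hne (by simp [h.1, h.2.1, h.2.2])
      · refine ⟨(mem_msols _).mpr ⟨by simp only; linear_combination hM, ?_⟩,
          mblock_flip3 x y z⟩
        intro h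
        simp only [Prod.ext_iff, neg_eq_zero] at h
        exact hne (by simp [h.1, h.2.1, h.2.2])
  rw [key]
  rw [card_insert_of_notMem (by
      simp only [mem_insert, mem_singleton]
      push_neg
      exact ⟨d12, d13, d14⟩),
    card_insert_of_notMem (by
      simp only [mem_insert, mem_singleton]
      push_neg
      exact ⟨d23, d24⟩),
    card_insert_of_notMem (by simpa using d34),
    card_singleton]

open scoped Classical in
theorem markoff_block_count_three_mod_four (p : ℕ) [Fact p.Prime] (hp : p % 4 = 3) :
    Nat.card {B : Set (ZMod p × ZMod p × ZMod p) |
      ∃ x y z : ZMod p, x ^ 2 + y ^ 2 + z ^ 2 = x * y * z ∧ (x, y, z) ≠ (0, 0, 0) ∧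
        B = {(x, y, z), (x, -y, -z), (-x, y, -z), (-x, -y, z)}} = p * (p - 3) / 4 := by
  classical
  have hp2 : p ≠ 2 := by omega
  have h3p : 3 ≤ p := by omega
  -- cardinality of the solution set
  have hcardT : (msols p).card = p * (p - 3) := by
    set S := (univ : Finset (ZMod p × ZMod p × ZMod p)).filter
        (fun v => v.1 ^ 2 + v.2.1 ^ 2 + v.2.2 ^ 2 = v.1 * v.2.1 * v.2.2) with hSdef
    have hTS : msols p = S.erase (0, 0, 0) := by
      ext v
      rw [mem_msols, mem_erase, hSdef, mem_filter]
      simp only [mem_univ, true_and]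
      tauto
    have h0S : ((0, 0, 0) : ZMod p × ZMod p × ZMod p) ∈ S := by
      rw [hSdef, mem_filter]
      norm_num
    have hTc : (msols p).card = S.card - 1 := by rw [hTS, card_erase_of_mem h0S]
    have hSc : S.card = p * (p - 3) + 1 := by
      have hZ : ((p * (p - 3) + 1 : ℕ) : ℤ) = (p : ℤ) ^ 2 + (1 - 3 * (p : ℤ)) := by
        push_cast [Nat.cast_sub h3p]
        ring
      have hca := count_all (p := p) hp
      rw [← hZ] at hca
      exact_mod_cast hca
    omega
  -- identify the set of blocks with the image of `msols p` under `mblock`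
  have hset : {B : Set (ZMod p × ZMod p × ZMod p) |
      ∃ x y z : ZMod p, x ^ 2 + y ^ 2 + z ^ 2 = x * y * z ∧ (x, y, z) ≠ (0, 0, 0) ∧
        B = {(x, y, z), (x, -y, -z), (-x, y, -z), (-x, -y, z)}}
      = ↑((msols p).image mblock) := by
    ext B
    simp only [Set.mem_setOf_eq, coe_image, Set.mem_image, mem_coe]
    constructor
    · rintro ⟨x, y, z, h1, hne, h3⟩
      exact ⟨(x, y, z), (mem_msols _).mpr ⟨h1, hne⟩, by rw [mblock_triple, h3]⟩
    · rintro ⟨⟨x, y, z⟩, hv, rfl⟩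
      rw [mem_msols] at hv
      exact ⟨x, y, z, hv.1, hv.2, (mblock_triple x y z).symm⟩
  have hc4 : (msols p).card = ((msols p).image mblock).card * 4 := by
    rw [card_eq_sum_card_image mblock (msols p)]
    rw [sum_congr rfl (fun B hB => fiber_card hp2 B hB), sum_const, smul_eq_mul]
  rw [hset, Nat.card_coe_set_eq, Set.ncard_coe_finset]
  omega
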